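/- Let F be a finite field of odd characteristic and let X := {(x, y, z) ∈ F³ : z = w² for some w ∈ F with w ≠ 0, and 4zy = x²}. Define χ̂_X(w) := Σ_{x∈X} ψ(x·w) for w ∈ F³. Then for every u ∈ F with u ≠ 0 and every t ∈ F one has |χ̂_X(tu, u, t²u)| = ((|F| − 1)/2) · |F|^{1/2}. (Note that every point (ξ, u, v) of the cone {uv = ξ²} with u ≠ 0 is of the form (tu, u, t²u) with t = ξ/u.) -/

import Mathlib

open scoped BigOperators

/-- The set `X = {(x, y, z) ∈ F³ : z is a nonzero square and 4zy = x²}`. -/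
def Xset (F : Type*) [Field F] [Fintype F] [DecidableEq F] : Finset (Fin 3 → F) :=
  Finset.univ.filter
    (fun x : Fin 3 → F => (∃ w : F, w ≠ 0 ∧ x 2 = w ^ 2) ∧ 4 * x 2 * x 1 = (x 0) ^ 2)

/-- The Fourier transform of the characteristic function of a finite set:
`χ̂_X(w) = ∑_{x ∈ X} ψ(x·w)`. -/
noncomputable def chiHat {F : Type*} [Field F] [Fintype F] {m : ℕ}
    (ψ : AddChar F ℂ) (X : Finset (Fin m → F)) (w : Fin m → F) : ℂ :=
  ∑ x ∈ X, ψ (∑ i, x i * w i)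

open Finset in

-- |∑ y, ψ (u y²)| = √q
lemma abs_quad_sum {F : Type*} [Field F] [Fintype F] [DecidableEq F]
    (hchar : ringChar F ≠ 2) (ψ : AddChar F ℂ) (hψ : ψ ≠ 1)
    (u : F) (hu : u ≠ 0) :
    ‖∑ y : F, ψ (u * y ^ 2)‖ = Real.sqrt (Fintype.card F) := by
  classical
  set χ : MulChar F ℂ := (quadraticChar F).ringHomComp (Int.castRingHom ℂ) with hχ
  have hχ1 : χ ≠ 1 :=
    (MulChar.ringHomComp_ne_one_iff Int.cast_injective).mpr (quadraticChar_ne_one hchar)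
  have hχ2 : χ.IsQuadratic := (quadraticChar_isQuadratic F).comp _
  have hψp : ψ.IsPrimitive := AddChar.IsPrimitive.of_ne_one hψ
  have hcount : ∀ b : F, (#{y : F | y ^ 2 = b}.toFinset : ℂ) = χ b + 1 := by
    intro b
    have := quadraticChar_card_sqrts hchar b
    have : ((#{y : F | y ^ 2 = b}.toFinset : ℤ) : ℂ) = ((quadraticChar F b + 1 : ℤ) : ℂ) := by
      exact_mod_cast congrArg (fun n : ℤ => (n : ℂ)) this
    simpa [χ, MulChar.ringHomComp] using this
  have hsum : (∑ y : F, ψ (u * y ^ 2)) = gaussSum χ (ψ.mulShift u) := by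
    have h1 : (∑ y : F, ψ (u * y ^ 2)) = ∑ b : F, ∑ y ∈ univ.filter (fun y : F => y ^ 2 = b), ψ (u * b) := by
      rw [Finset.sum_fiberwise' univ (fun y : F => y ^ 2) (fun b => ψ (u * b))]
    rw [h1]
    have h2 : ∀ b : F, ∑ y ∈ univ.filter (fun y : F => y ^ 2 = b), ψ (u * b)
        = (χ b + 1) * ψ (u * b) := by
      intro b
      rw [Finset.sum_const, nsmul_eq_mul, ← hcount b]
      congr 1
      simp [Set.toFinset_setOf]
    simp_rw [h2, add_mul, one_mul, Finset.sum_add_distrib]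
    have h3 : ∑ b : F, ψ (u * b) = 0 := by
      have := AddChar.sum_eq_zero_of_ne_one (hψp hu)
      simpa [AddChar.mulShift_apply] using this
    rw [h3, add_zero, gaussSum]
    simp [AddChar.mulShift_apply]
  rw [hsum]
  -- relate to gaussSum χ ψ
  set uu : Fˣ := Units.mk0 u hu
  have hmul : χ uu * gaussSum χ (ψ.mulShift uu) = gaussSum χ ψ := gaussSum_mulShift χ ψ uu
  have habs1 : ‖χ uu‖ = 1 := by
    rcases hχ2 uu with h | h | h
    · have : χ ((uu : Fˣ) : F) ≠ 0 := by
        rw [← χ.coe_toUnitHom]; exact Units.ne_zero _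
      exact absurd h this
    · simp [h]
    · simp [h]
  have hgs : ‖gaussSum χ ψ‖ = Real.sqrt (Fintype.card F) := by
    have hsq := gaussSum_sq hχ1 hχ2 hψp
    have habsm1 : ‖χ (-1)‖ = 1 := by
      rcases hχ2 (-1) with h | h | h
      · have : χ (((-1 : Fˣ) : F)) ≠ 0 := by
          rw [← χ.coe_toUnitHom]; exact Units.ne_zero _
        simp only [Units.val_neg, Units.val_one] at this
        exact absurd h this
      · simp [h]
      · simp [h]
    have : ‖gaussSum χ ψ‖ ^ 2 = (Fintype.card F : ℝ) := by
      rw [← norm_pow, hsq, norm_mul, habsm1, one_mul]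
      simp
    rw [← Real.sqrt_sq (norm_nonneg _), this]
  have : ‖gaussSum χ (ψ.mulShift uu)‖ = ‖gaussSum χ ψ‖ := by
    rw [← hmul, norm_mul, habs1, one_mul]
  have hco : ψ.mulShift (uu : F) = ψ.mulShift u := rfl
  rw [← hco, this, hgs]

open Finset in
theorem key {F : Type*} [Field F] [Fintype F] [DecidableEq F]
    (hchar : ringChar F ≠ 2) (ψ : AddChar F ℂ)
    (u t : F) (hu : u ≠ 0) :
    (2 : ℂ) * chiHat ψ (Xset F) ![t * u, u, t ^ 2 * u]
      = ((Fintype.card F - 1 : ℕ) : ℂ) * ∑ y : F, ψ (u * y ^ 2) := by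
  classical
  have h2 : (2 : F) ≠ 0 := Ring.two_ne_zero hchar
  have h4 : (4 : F) ≠ 0 := by
    have : (4 : F) = 2 * 2 := by norm_num
    rw [this]; exact mul_ne_zero h2 h2
  set w : Fin 3 → F := ![t * u, u, t ^ 2 * u] with hw
  set g : (Fin 3 → F) → ℂ := fun y => ψ (∑ i, y i * w i) with hg
  set f : F × F → (Fin 3 → F) := fun p => ![p.2, p.2 ^ 2 / (4 * p.1 ^ 2), p.1 ^ 2] with hf
  set D : Finset (F × F) := (Finset.univ.erase (0 : F)) ×ˢ Finset.univ with hD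
  -- image of f on D is Xset
  have himg : D.image f = Xset F := by
    ext y
    simp only [mem_image, hD, mem_product, mem_erase, mem_univ, and_true, true_and,
      Xset, mem_filter]
    constructor
    · rintro ⟨⟨s, x⟩, hs, rfl⟩
      refine ⟨⟨s, hs, by simp [hf]⟩, ?_⟩
      simp only [hf]
      have hs2 : (4 : F) * s ^ 2 ≠ 0 := mul_ne_zero h4 (pow_ne_zero _ hs)
      show 4 * s ^ 2 * (x ^ 2 / (4 * s ^ 2)) = x ^ 2
      field_simp
    · rintro ⟨⟨v, hv, hy2⟩, heq⟩
      refine ⟨(v, y 0), hv, ?_⟩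
      funext i
      fin_cases i <;> simp [hf]
      · have hv2 : (4 : F) * v ^ 2 ≠ 0 := mul_ne_zero h4 (pow_ne_zero _ hv)
        rw [hy2] at heq
        field_simp
        linear_combination -heq
      · exact hy2.symm
  -- fibers have cardinality 2
  have hfib : ∀ y ∈ Xset F, #(D.filter (fun p => f p = y)) = 2 := by
    intro y hy
    simp only [Xset, mem_filter, mem_univ, true_and] at hy
    obtain ⟨⟨v, hv, hy2⟩, heq⟩ := hy
    have hset : D.filter (fun p => f p = y) = {(v, y 0), (-v, y 0)} := by
      ext ⟨s, x⟩
      simp only [mem_filter, hD, mem_product, mem_erase, mem_univ, and_true, true_and,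
        mem_insert, mem_singleton, Prod.mk.injEq]
      constructor
      · rintro ⟨hs, hfp⟩
        have h0 : x = y 0 := by
          have := congrFun hfp 0; simpa [hf] using this
        have h2' : s ^ 2 = y 2 := by
          have := congrFun hfp 2; simpa [hf] using this
        rw [hy2] at h2'
        rcases sq_eq_sq_iff_eq_or_eq_neg.mp h2' with h | h
        · exact Or.inl ⟨h, h0⟩
        · exact Or.inr ⟨h, h0⟩
      · have hcomp : ∀ s' : F, s' ≠ 0 → s' ^ 2 = v ^ 2 →
            ((s', y 0) : F × F).1 ≠ 0 ∧ f (s', y 0) = y := by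
          intro s' hs' hsq
          refine ⟨hs', ?_⟩
          funext i
          fin_cases i <;> simp [hf]
          · have hv2 : (4 : F) * s' ^ 2 ≠ 0 := mul_ne_zero h4 (pow_ne_zero _ hs')
            rw [hy2, ← hsq] at heq
            field_simp
            linear_combination -heq
          · rw [hsq, ← hy2]
        rintro (⟨h1, h2⟩ | ⟨h1, h2⟩) <;> rw [h1, h2]
        · exact hcomp v hv rfl
        · exact hcomp (-v) (neg_ne_zero.mpr hv) (by ring)
    rw [hset]
    refine card_pair ?_
    intro h
    rw [Prod.mk.injEq] at h
    exact hv ((Ring.eq_self_iff_eq_zero_of_char_ne_two hchar).mp h.1.symm)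
    -- v = -v → v = 0
  -- sum over D equals 2 * chiHat
  have hDsum : ∑ p ∈ D, g (f p) = (2 : ℂ) * chiHat ψ (Xset F) w := by
    rw [Finset.sum_comp g f, himg]
    rw [chiHat, Finset.mul_sum]
    refine Finset.sum_congr rfl fun y hy => ?_
    rw [hfib y hy]
    simp [hg]
  -- sum over D equals (q-1) * G
  have hDsum' : ∑ p ∈ D, g (f p)
      = ((Fintype.card F - 1 : ℕ) : ℂ) * ∑ y : F, ψ (u * y ^ 2) := by
    rw [hD, Finset.sum_product]
    have hinner : ∀ s : F, s ≠ 0 →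
        ∑ x : F, g (f (s, x)) = ∑ y : F, ψ (u * y ^ 2) := by
      intro s hs
      have he : Function.Bijective (fun y : F => 2 * s * y - 2 * t * s ^ 2) := by
        rw [← Finite.injective_iff_bijective]
        intro a b hab
        have h2s : (2 : F) * s ≠ 0 := mul_ne_zero h2 hs
        simp only [sub_left_inj] at hab
        exact mul_left_cancel₀ h2s hab
      rw [← Function.Bijective.sum_comp he (fun x => g (f (s, x)))]
      refine Finset.sum_congr rfl fun y _ => ?_
      simp only [hg, hf, hw, Fin.sum_univ_three]
      congr 1
      simp only [Matrix.cons_val_zero, Matrix.cons_val_one, Matrix.head_cons,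
        Matrix.cons_val_two, Matrix.tail_cons]
      have hs2 : (4 : F) * s ^ 2 ≠ 0 := mul_ne_zero h4 (pow_ne_zero _ hs)
      field_simp
      ring
    rw [Finset.sum_congr rfl (fun s hs => hinner s (Finset.ne_of_mem_erase hs))]
    rw [Finset.sum_const, Finset.card_erase_of_mem (mem_univ _), Finset.card_univ,
      nsmul_eq_mul]
  rw [← hDsum', hDsum]

theorem statement8 {F : Type*} [Field F] [Fintype F] [DecidableEq F]
    (hchar : ringChar F ≠ 2) (ψ : AddChar F ℂ) (hψ : ∃ a, ψ a ≠ 1)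
    (u t : F) (hu : u ≠ 0) :
    ‖chiHat ψ (Xset F) ![t * u, u, t ^ 2 * u]‖ =
      ((Fintype.card F : ℝ) - 1) / 2 * Real.sqrt (Fintype.card F) := by
  have hψ1 : ψ ≠ 1 := AddChar.ne_one_iff.mpr hψ
  have hk := key hchar ψ u t hu
  have habsG := abs_quad_sum hchar ψ hψ1 u hu
  have h := congrArg (‖·‖) hk
  rw [norm_mul, norm_mul, habsG] at h
  have hq1 : 1 ≤ Fintype.card F := Fintype.card_pos
  have hcast : (((Fintype.card F - 1 : ℕ) : ℂ)) = ((Fintype.card F : ℂ) - 1) := by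
    push_cast [Nat.cast_sub hq1]; ring
  rw [hcast] at h
  have h2 : ‖(2 : ℂ)‖ = 2 := by norm_num
  have hq1' : (1 : ℝ) ≤ (Fintype.card F : ℝ) := by exact_mod_cast hq1
  have hcard : ‖(Fintype.card F : ℂ) - 1‖ = (Fintype.card F : ℝ) - 1 := by
    rw [show ((Fintype.card F : ℂ) - 1) = (((Fintype.card F : ℝ) - 1 : ℝ) : ℂ) by push_cast; ring,
      Complex.norm_real, Real.norm_eq_abs, abs_of_nonneg (by linarith)]
  rw [h2, hcard] at h
  linarith
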